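/- Let C be a permutation-invariant partition of the player set of a finite normal-form game with identical interests. The ω-limit set of every solution of the centroid CT-ECFP differential inclusion ẏ ∈ BR(y) − y (taking values in the set of centroid, i.e. class-constant, distributions) is a connected subset of SNE along which U is constant. -/

import Mathlib

open MeasureTheory Filter Topology

noncomputable section

namespace ECFP

variable {ι A κ : Type*}

/-- The mixed-strategy simplex over a finite action set `Y` inside the action universe `A`. -/
def simplex (Y : Finset A) : Set (A → ℝ) :=
  {p | (∀ a, 0 ≤ p a) ∧ (∀ a, a ∉ Y → p a = 0) ∧ ∑ a ∈ Y, p a = 1}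

/-- The space `Δⁿ` of joint mixed strategies. -/
def Delta (Y : ι → Finset A) : Set (ι → A → ℝ) :=
  {p | ∀ i, p i ∈ simplex (Y i)}

variable [Fintype ι] [DecidableEq ι] [Fintype A] [DecidableEq κ]

/-- The mixed extension of the common utility `u`:
`U(p₁,…,pₙ) = ∑_y u(y) p₁(y₁)⋯pₙ(yₙ)`. -/
def U (u : (ι → A) → ℝ) (p : ι → A → ℝ) : ℝ :=
  ∑ y : ι → A, u y * ∏ i, p i (y i)

/-- The `ε`-best-response set of player `i` against the joint strategy `p`
(only the components `p_{-i}` matter, since player `i`'s component is overwritten):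
`{pᵢ ∈ Δᵢ : U(pᵢ,p_{-i}) ≥ U(qᵢ,p_{-i}) - ε  ∀ qᵢ ∈ Δᵢ}`. -/
def BRi (Y : ι → Finset A) (u : (ι → A) → ℝ) (ε : ℝ) (p : ι → A → ℝ) (i : ι) :
    Set (A → ℝ) :=
  {pi | pi ∈ simplex (Y i) ∧
    ∀ qi ∈ simplex (Y i),
      U u (Function.update p i pi) ≥ U u (Function.update p i qi) - ε}

/-- The joint `ε`-best-response set `BR^ε(p) = (BR₁^ε(p_{-1}),…,BRₙ^ε(p_{-n}))`. -/
def BR (Y : ι → Finset A) (u : (ι → A) → ℝ) (ε : ℝ) (p : ι → A → ℝ) :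
    Set (ι → A → ℝ) :=
  {b | ∀ i, b i ∈ BRi Y u ε p i}

/-- The profile obtained from `y` by swapping the strategies of players `i` and `j`. -/
def swapStrat (y : ι → A) (i j : ι) : ι → A :=
  Function.update (Function.update y i (y j)) j (y i)

/-- `cls : ι → κ` encodes a permutation-invariant partition of the player set (the classes
are the fibers of `cls`): players in the same class have the same action set, and the utility
is invariant under swapping the strategies of two same-class players in any strategy profile. -/
def PermInvariant (Y : ι → Finset A) (u : (ι → A) → ℝ) (cls : ι → κ) : Prop :=
  ∀ i j : ι, cls i = cls j →
    Y i = Y j ∧ ∀ y : ι → A, (∀ k, y k ∈ Y k) → u (swapStrat y i j) = u y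

/-- The equivalence class (as a finset of players) of player `i`. -/
def cluster (cls : ι → κ) (i : ι) : Finset ι :=
  Finset.univ.filter (fun j => cls j = cls i)

/-- The centroid distribution `p̄`: player `i` is assigned the average of the strategies of
the players in `i`'s class. -/
def centroid (cls : ι → κ) (p : ι → A → ℝ) : ι → A → ℝ :=
  fun i => ((cluster cls i).card : ℝ)⁻¹ • ∑ j ∈ cluster cls i, p j

/-- A joint strategy is class-constant if same-class players use identical strategies. -/
def classConst (cls : ι → κ) (p : ι → A → ℝ) : Prop :=
  ∀ i j, cls i = cls j → p i = p j

/-- The set of Nash equilibria. -/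
def NE (Y : ι → Finset A) (u : (ι → A) → ℝ) : Set (ι → A → ℝ) :=
  {p | p ∈ Delta Y ∧ ∀ i, ∀ qi ∈ simplex (Y i),
    U u (Function.update p i qi) ≤ U u p}

/-- The set of symmetric Nash equilibria relative to the partition `cls`. -/
def SNE (Y : ι → Finset A) (u : (ι → A) → ℝ) (cls : ι → κ) : Set (ι → A → ℝ) :=
  {p | p ∈ NE Y u ∧ classConst cls p}

/-- The set of mean-centric equilibria relative to the partition `cls`:
`U(pᵢ, p̄_{-i}) ≥ U(pᵢ', p̄_{-i})` for all `pᵢ' ∈ Δᵢ` and all `i`. -/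
def MCE (Y : ι → Finset A) (u : (ι → A) → ℝ) (cls : ι → κ) : Set (ι → A → ℝ) :=
  {p | p ∈ Delta Y ∧ ∀ i, ∀ qi ∈ simplex (Y i),
    U u (Function.update (centroid cls p) i qi)
      ≤ U u (Function.update (centroid cls p) i (p i))}

/-- `V(p) = (1/n) ∑ᵢ U(pᵢ, p̄_{-i})`. -/
def Vfun (u : (ι → A) → ℝ) (cls : ι → κ) (p : ι → A → ℝ) : ℝ :=
  (Fintype.card ι : ℝ)⁻¹ * ∑ i, U u (Function.update (centroid cls p) i (p i))

/-- A discrete-time ECFP process w.r.t. `(Γ, 𝒞)`: `q(1) = a(1)`,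
`q(t+1) = q(t) + γₜ (a(t+1) − q(t))` and `a(t+1) ∈ BR^{εₜ}(q̄(t))` for all `t`
(time is indexed by `ℕ`, i.e. `t = 0` plays the role of `t = 1` in the paper). -/
structure IsECFP (Y : ι → Finset A) (u : (ι → A) → ℝ) (cls : ι → κ)
    (γ ε : ℕ → ℝ) (a q : ℕ → ι → A → ℝ) : Prop where
  a_init_mem : a 0 ∈ Delta Y
  q_mem : ∀ t, q t ∈ Delta Y
  init : q 0 = a 0
  step : ∀ t, q (t + 1) = q t + γ t • (a (t + 1) - q t)
  br : ∀ t, a (t + 1) ∈ BR Y u (ε t) (centroid cls (q t))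

/-- A solution of the differential inclusion `ẋ ∈ F(x)` taking values in `Δⁿ`:
an everywhere-`Δⁿ`-valued trajectory on `[0,∞)` which is the integral of a locally
integrable selection `g(t) ∈ F(x(t))` (a.e.). -/
def IsSolution (Y : ι → Finset A) (F : (ι → A → ℝ) → Set (ι → A → ℝ))
    (x : ℝ → ι → A → ℝ) : Prop :=
  (∀ t : ℝ, 0 ≤ t → x t ∈ Delta Y) ∧
  ∃ g : ℝ → ι → A → ℝ,
    LocallyIntegrableOn g (Set.Ici (0 : ℝ)) ∧
    (∀ᵐ t ∂(volume.restrict (Set.Ici (0 : ℝ))), g t ∈ F (x t)) ∧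
    ∀ t : ℝ, 0 ≤ t → x t = x 0 + ∫ s in Set.Ioc (0 : ℝ) t, g s

/-- Right-hand side of the joint CT-ECFP differential inclusion `q̇ ∈ BR(q̄) − q`. -/
def Fjoint (Y : ι → Finset A) (u : (ι → A) → ℝ) (cls : ι → κ)
    (q : ι → A → ℝ) : Set (ι → A → ℝ) :=
  (fun b => b - q) '' BR Y u 0 (centroid cls q)

/-- Right-hand side of the centroid CT-ECFP differential inclusion `ẏ ∈ BR(y) − y`. -/
def Fcent (Y : ι → Finset A) (u : (ι → A) → ℝ)
    (y : ι → A → ℝ) : Set (ι → A → ℝ) :=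
  (fun b => b - y) '' BR Y u 0 y

/-- The ω-limit set of a continuous-time trajectory: all limits of sequences
`x(t_k)` with `t_k → ∞`. -/
def omegaLimitSet (x : ℝ → ι → A → ℝ) : Set (ι → A → ℝ) :=
  {p | ∃ tk : ℕ → ℝ, Tendsto tk atTop atTop ∧ Tendsto (fun k => x (tk k)) atTop (𝓝 p)}

/-- The set of limit points of a (discrete-time) sequence. -/
def seqLimitPoints (q : ℕ → ι → A → ℝ) : Set (ι → A → ℝ) :=
  {p | ∃ φ : ℕ → ℕ, StrictMono φ ∧ Tendsto (fun k => q (φ k)) atTop (𝓝 p)}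

/-- A compact set `X ⊆ Δⁿ` is internally chain transitive for the inclusion `ẋ ∈ F(x)`:
any two points of `X` can be joined, for every `ε > 0` and `T > 0`, by finitely many
solution pieces of duration `> T` staying in `X`, with jumps of size `≤ ε`. -/
def InternallyChainTransitive (Y : ι → Finset A)
    (F : (ι → A → ℝ) → Set (ι → A → ℝ)) (X : Set (ι → A → ℝ)) : Prop :=
  IsCompact X ∧ X ⊆ Delta Y ∧
  ∀ ξ ∈ X, ∀ η ∈ X, ∀ ε : ℝ, 0 < ε → ∀ T : ℝ, 0 < T →
    ∃ k : ℕ, 0 < k ∧ ∃ x : ℕ → ℝ → ι → A → ℝ, ∃ tt : ℕ → ℝ,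
      (∀ i < k, IsSolution Y F (x i)) ∧
      (∀ i < k, T < tt i) ∧
      (∀ i < k, ∀ s : ℝ, 0 ≤ s → s ≤ tt i → x i s ∈ X) ∧
      (∀ i, i + 1 < k → ‖x i (tt i) - x (i + 1) 0‖ ≤ ε) ∧
      ‖x 0 0 - ξ‖ ≤ ε ∧ ‖x (k - 1) (tt (k - 1)) - η‖ ≤ ε

end ECFP

/-!
All players share the utility `U`, so `U` is a Lyapunov function for the best-response dynamics.
Since `U` is multilinear, its rate of change along `ẋ = b - x` with `b ∈ BR(x)` is the sum over
the players of the gains `U(bᵢ, x₋ᵢ) - U(x)`, each nonnegative. A solution is only absolutely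
continuous, so this is proved in integrated form with an `O((t - s)²)` error, which subdivision
removes: `U ∘ x` is nondecreasing. It converges to the common value of `U` on the ω-limit set, and
an ω-limit point at which some player has a profitable deviation would make `U ∘ x` overshoot that
value. Connectedness holds because the ω-limit set is a nested intersection of the compact
connected sets `closure (x '' [n, ∞))`, and class-constancy passes to the limit as a closed
condition.
-/

open Set
open scoped NNReal

theorem Finset.abs_prod_sub_prod_le {β : Type*} (s : Finset β) {f g : β → ℝ}
    (hf : ∀ b ∈ s, |f b| ≤ 1) (hg : ∀ b ∈ s, |g b| ≤ 1) :
    |∏ b ∈ s, f b - ∏ b ∈ s, g b| ≤ ∑ b ∈ s, |f b - g b| := by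
  induction s using Finset.cons_induction with
  | empty => simp
  | cons a s ha ih =>
    simp only [Finset.mem_cons, forall_eq_or_imp] at hf hg
    rw [Finset.prod_cons, Finset.prod_cons, Finset.sum_cons]
    have hP : |∏ b ∈ s, f b| ≤ 1 := by
      rw [Finset.abs_prod]
      exact Finset.prod_le_one (fun _ _ => abs_nonneg _) hf.2
    calc |f a * ∏ b ∈ s, f b - g a * ∏ b ∈ s, g b|
        = |(f a - g a) * ∏ b ∈ s, f b + g a * (∏ b ∈ s, f b - ∏ b ∈ s, g b)| := by ring_nf
      _ ≤ |f a - g a| * |∏ b ∈ s, f b| + |g a| * |∏ b ∈ s, f b - ∏ b ∈ s, g b| := by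
          rw [← abs_mul, ← abs_mul]; exact abs_add_le _ _
      _ ≤ |f a - g a| * 1 + 1 * ∑ b ∈ s, |f b - g b| := by
          gcongr
          exacts [hg.1, ih hf.2 hg.2]
      _ = |f a - g a| + ∑ b ∈ s, |f b - g b| := by ring

theorem monotoneOn_of_sub_sq_le {f : ℝ → ℝ} {S : Set ℝ} (hS : S.OrdConnected) (C : ℝ)
    (h : ∀ s ∈ S, ∀ t ∈ S, s ≤ t → f s - C * (t - s) ^ 2 ≤ f t) : MonotoneOn f S := by
  intro s hs t ht hst
  have hsub : ∀ m : ℕ, 0 < m → f s - C * (t - s) ^ 2 / m ≤ f t := by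
    intro m hm
    have hm' : (0 : ℝ) < m := Nat.cast_pos.2 hm
    set d := (t - s) / m with hd
    have hd0 : 0 ≤ d := div_nonneg (sub_nonneg.2 hst) hm'.le
    have hmem : ∀ k ≤ m, s + k * d ∈ S := fun k hk => hS.out hs ht
      ⟨le_add_of_nonneg_right (by positivity), by
        have : (k : ℝ) * d ≤ m * d := by gcongr
        rw [hd, mul_div_cancel₀ _ hm'.ne'] at this; linarith⟩
    have hstep : ∀ k ≤ m, f s - k * (C * d ^ 2) ≤ f (s + k * d) := by
      intro k hk
      induction k with
      | zero => simp
      | succ k ih =>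
        have h1 := h _ (hmem k (by omega)) _ (hmem (k + 1) hk) (by gcongr; simp)
        have h2 := ih (by omega)
        push_cast at h1 ⊢
        nlinarith
    have hend : s + m * d = t := by rw [hd]; field_simp; ring
    have herr : m * (C * d ^ 2) = C * (t - s) ^ 2 / m := by rw [hd]; field_simp
    simpa only [hend, herr] using hstep m le_rfl
  refine le_of_tendsto ?_ ((Filter.eventually_gt_atTop 0).mono hsub)
  simpa using tendsto_const_nhds.sub (tendsto_const_div_atTop_nhds_zero_nat (C * (t - s) ^ 2))

theorem IsPreconnected.iInter_of_antitone {X : Type*} [TopologicalSpace X] [T2Space X]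
    {K : ℕ → Set X} (hK : Antitone K) (hc : ∀ n, IsCompact (K n))
    (hp : ∀ n, IsPreconnected (K n)) : IsPreconnected (⋂ n, K n) := by
  set S := ⋂ n, K n
  have hS : IsCompact S :=
    (hc 0).of_isClosed_subset (isClosed_iInter fun n => (hc n).isClosed) (iInter_subset K 0)
  rw [isPreconnected_iff_subset_of_disjoint_closed]
  intro u v hu hv hSuv huv
  -- separate the two closed pieces of `S` and push the separation to some `K n` by compactness
  obtain ⟨U, V, hU, hV, hSuU, hSvV, hUV⟩ := SeparatedNhds.of_isCompact_isCompact
    (hS.inter_right hu) (hS.inter_right hv) (by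
      rw [Set.disjoint_iff_inter_eq_empty, ← huv]; ext; simp only [mem_inter_iff]; tauto)
  obtain ⟨n, hn⟩ := exists_subset_nhds_of_isCompact' hK.directed_ge hc (fun n => (hc n).isClosed)
    (U := U ∪ V) fun z hz => (hU.union hV).mem_nhds <| by
      rcases hSuv hz with h | h
      exacts [Or.inl (hSuU ⟨hz, h⟩), Or.inr (hSvV ⟨hz, h⟩)]
  have hSn : S ⊆ K n := iInter_subset K n
  rcases (hp n).subset_or_subset hU hV hUV hn with hKU | hKV
  · refine Or.inl fun z hz => (hSuv hz).resolve_right fun hzv => ?_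
    exact hUV.ne_of_mem (hKU (hSn hz)) (hSvV ⟨hz, hzv⟩) rfl
  · refine Or.inr fun z hz => (hSuv hz).resolve_left fun hzu => ?_
    exact hUV.ne_of_mem (hSuU ⟨hz, hzu⟩) (hKV (hSn hz)) rfl

namespace ECFP

section

variable {ι A κ : Type*}

theorem isClosed_setOf_classConst (cls : ι → κ) :
    IsClosed {p : ι → A → ℝ | classConst cls p} := by
  simp only [classConst, ofPred_forall]
  exact isClosed_iInter fun i => isClosed_iInter fun j => isClosed_iInter fun _ =>
    isClosed_eq (continuous_apply i) (continuous_apply j)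

theorem omegaLimitSet_subset_of_isClosed {x : ℝ → ι → A → ℝ} {S : Set (ι → A → ℝ)}
    (hS : IsClosed S) (hx : ∀ᶠ t in atTop, x t ∈ S) : omegaLimitSet x ⊆ S :=
  fun _ ⟨_, htk, hxtk⟩ => hS.mem_of_tendsto hxtk (htk.eventually hx)

theorem mem_Icc_of_mem_simplex {Y : Finset A} {p : A → ℝ} (hp : p ∈ simplex Y) (a : A) :
    p a ∈ Icc 0 1 := by
  refine ⟨hp.1 a, ?_⟩
  by_cases ha : a ∈ Y
  · exact hp.2.2 ▸ Finset.single_le_sum (fun b _ => hp.1 b) ha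
  · simp [hp.2.1 a ha]

theorem isClosed_simplex (Y : Finset A) : IsClosed (simplex Y) := by
  simp only [simplex, ofPred_and, ofPred_forall]
  exact (isClosed_iInter fun a => isClosed_le continuous_const (continuous_apply a)).inter
    ((isClosed_iInter fun a => isClosed_iInter fun _ => isClosed_eq (continuous_apply a)
      continuous_const).inter
    (isClosed_eq (continuous_finsetSum _ fun a _ => continuous_apply a) continuous_const))

theorem isClosed_Delta (Y : ι → Finset A) : IsClosed (Delta Y) := by
  simp only [Delta, ofPred_forall]
  exact isClosed_iInter fun i => (isClosed_simplex (Y i)).preimage (continuous_apply i)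

section

variable [Fintype ι] [Fintype A]

theorem abs_apply_apply_le_norm (p : ι → A → ℝ) (i : ι) (a : A) : |p i a| ≤ ‖p‖ :=
  (norm_le_pi_norm (p i) a).trans (norm_le_pi_norm p i)

theorem norm_le_of_forall_abs_apply_apply_le {p : ι → A → ℝ} {c : ℝ} (hc : 0 ≤ c)
    (h : ∀ i a, |p i a| ≤ c) : ‖p‖ ≤ c :=
  (pi_norm_le_iff_of_nonneg hc).2 fun i => (pi_norm_le_iff_of_nonneg hc).2 fun a => h i a

theorem norm_le_one_of_mem_Delta {Y : ι → Finset A} {p : ι → A → ℝ} (hp : p ∈ Delta Y) :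
    ‖p‖ ≤ 1 :=
  norm_le_of_forall_abs_apply_apply_le zero_le_one fun i a =>
    abs_le.2 ⟨by linarith [(mem_Icc_of_mem_simplex (hp i) a).1],
      (mem_Icc_of_mem_simplex (hp i) a).2⟩

theorem norm_sub_le_one_of_mem_Delta {Y : ι → Finset A} {p q : ι → A → ℝ} (hp : p ∈ Delta Y)
    (hq : q ∈ Delta Y) : ‖p - q‖ ≤ 1 :=
  norm_le_of_forall_abs_apply_apply_le zero_le_one fun i a =>
    abs_sub_le_of_nonneg_of_le (mem_Icc_of_mem_simplex (hp i) a).1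
      (mem_Icc_of_mem_simplex (hp i) a).2 (mem_Icc_of_mem_simplex (hq i) a).1
      (mem_Icc_of_mem_simplex (hq i) a).2

theorem isCompact_Delta (Y : ι → Finset A) : IsCompact (Delta Y) :=
  (isCompact_closedBall 0 1).of_isClosed_subset (isClosed_Delta Y) fun _ hp =>
    mem_closedBall_zero_iff.2 (norm_le_one_of_mem_Delta hp)

theorem norm_sub_le_max_of_forall_eq_or_eq {z p q : ι → A → ℝ} (hz : ∀ j, z j = p j ∨ z j = q j)
    (w : ι → A → ℝ) : ‖z - w‖ ≤ max ‖p - w‖ ‖q - w‖ :=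
  (pi_norm_le_iff_of_nonneg (le_max_of_le_left (norm_nonneg _))).2 fun j => by
    rcases hz j with h | h <;> simp only [Pi.sub_apply, h]
    exacts [le_max_of_le_left (norm_le_pi_norm (p - w) j),
      le_max_of_le_right (norm_le_pi_norm (q - w) j)]

theorem omegaLimitSet_eq_iInter_closure (x : ℝ → ι → A → ℝ) :
    omegaLimitSet x = ⋂ n : ℕ, closure (x '' Ici (n : ℝ)) := by
  refine subset_antisymm (subset_iInter fun n => omegaLimitSet_subset_of_isClosed
    isClosed_closure ((eventually_ge_atTop (n : ℝ)).mono fun t ht =>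
      subset_closure (mem_image_of_mem x ht))) fun p hp => ?_
  have hclose : ∀ n : ℕ, ∃ t ∈ Ici (n : ℝ), dist (x t) p < 1 / (n + 1) := fun n => by
    obtain ⟨_, ⟨t, ht, rfl⟩, hdist⟩ :=
      Metric.mem_closure_iff.1 (mem_iInter.1 hp n) (1 / (n + 1)) Nat.one_div_pos_of_nat
    exact ⟨t, ht, by rwa [dist_comm]⟩
  choose tk htk hdist using hclose
  exact ⟨tk, tendsto_atTop_mono htk tendsto_natCast_atTop_atTop,
    tendsto_iff_dist_tendsto_zero.2 (squeeze_zero (fun _ => dist_nonneg) (fun n => (hdist n).le)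
      tendsto_one_div_add_atTop_nhds_zero_nat)⟩

theorem isConnected_omegaLimitSet {x : ℝ → ι → A → ℝ} {K : Set (ι → A → ℝ)} (hK : IsCompact K)
    (hxK : ∀ t, 0 ≤ t → x t ∈ K) (hx : ContinuousOn x (Ici 0)) :
    IsConnected (omegaLimitSet x) := by
  refine ⟨?_, ?_⟩
  · obtain ⟨p, -, φ, hφ, hlim⟩ := hK.tendsto_subseq fun n : ℕ => hxK n n.cast_nonneg
    exact ⟨p, fun n => φ n, tendsto_natCast_atTop_atTop.comp hφ.tendsto_atTop, hlim⟩
  have hsub : ∀ n : ℕ, Ici (n : ℝ) ⊆ Ici 0 := fun n => Ici_subset_Ici.2 n.cast_nonneg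
  rw [omegaLimitSet_eq_iInter_closure]
  refine IsPreconnected.iInter_of_antitone
    (fun m n hmn => closure_mono (image_mono (Ici_subset_Ici.2 (Nat.cast_le.2 hmn))))
    (fun n => hK.of_isClosed_subset isClosed_closure
      (closure_minimal (image_subset_iff.2 fun t ht => hxK t (hsub n ht)) hK.isClosed))
    fun n => (isPreconnected_Ici.image x (hx.mono (hsub n))).closure

theorem IsSolution.exists_integral_repr {Y : ι → Finset A}
    {F : (ι → A → ℝ) → Set (ι → A → ℝ)} {x : ℝ → ι → A → ℝ} (hx : IsSolution Y F x) :
    ∃ g : ℝ → ι → A → ℝ, (∀ᵐ r ∂volume.restrict (Ici 0), g r ∈ F (x r)) ∧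
      ∀ ⦃s t : ℝ⦄, 0 ≤ s → s ≤ t →
        IntegrableOn g (Ioc s t) ∧ x t - x s = ∫ r in Ioc s t, g r := by
  obtain ⟨-, g, hgi, hgF, hxg⟩ := hx
  have hint : ∀ ⦃s t : ℝ⦄, 0 ≤ s → IntegrableOn g (Ioc s t) := fun s t hs =>
    (hgi.integrableOn_compact_subset (fun r hr => hs.trans hr.1) isCompact_Icc).mono_set
      Ioc_subset_Icc_self
  refine ⟨g, hgF, fun s t hs hst => ⟨hint hs, ?_⟩⟩
  rw [hxg t (hs.trans hst), hxg s hs, ← Ioc_union_Ioc_eq_Ioc hs hst,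
    setIntegral_union (Ioc_disjoint_Ioc_of_le le_rfl) measurableSet_Ioc (hint le_rfl) (hint hs)]
  abel

theorem IsSolution.lipschitzOnWith {Y : ι → Finset A}
    {F : (ι → A → ℝ) → Set (ι → A → ℝ)} {x : ℝ → ι → A → ℝ} (hx : IsSolution Y F x) {M : ℝ≥0}
    (hF : ∀ p ∈ Delta Y, ∀ v ∈ F p, ‖v‖ ≤ M) : LipschitzOnWith M x (Ici 0) := by
  obtain ⟨g, hgF, hrepr⟩ := hx.exists_integral_repr
  have hle : ∀ ⦃s t : ℝ⦄, 0 ≤ s → s ≤ t → ‖x t - x s‖ ≤ M * (t - s) := fun s t hs hst => by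
    rw [(hrepr hs hst).2, ← Real.volume_real_Ioc_of_le hst]
    refine norm_setIntegral_le_of_norm_le_const_ae measure_Ioc_lt_top ?_
    filter_upwards [ae_restrict_of_ae_restrict_of_subset (fun r hr => hs.trans hr.1.le) hgF,
      ae_restrict_mem measurableSet_Ioc] with r hr hrI
    exact hF _ (hx.1 r (hs.trans hrI.1.le)) _ hr
  refine LipschitzOnWith.of_dist_le_mul fun t ht s hs => ?_
  rw [dist_eq_norm, Real.dist_eq]
  rcases le_total s t with hst | hts
  · exact (hle hs hst).trans_eq (by rw [abs_of_nonneg (sub_nonneg.2 hst)])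
  · rw [norm_sub_rev, abs_sub_comm]
    exact (hle ht hts).trans_eq (by rw [abs_of_nonneg (sub_nonneg.2 hts)])

end

section

variable [Fintype ι] [DecidableEq ι] [Fintype A]

open Function

theorem continuous_U (u : (ι → A) → ℝ) : Continuous (U u) :=
  continuous_finsetSum _ fun y _ => continuous_const.mul <|
    continuous_finsetProd _ fun i _ => (continuous_apply (y i)).comp (continuous_apply i)

theorem abs_U_sub_le (u : (ι → A) → ℝ) {p q : ι → A → ℝ} (hp : ‖p‖ ≤ 1) (hq : ‖q‖ ≤ 1) :
    |U u p - U u q| ≤ (∑ y, |u y|) * Fintype.card ι * ‖p - q‖ := by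
  have hprod : ∀ y : ι → A, |∏ i, p i (y i) - ∏ i, q i (y i)| ≤ Fintype.card ι * ‖p - q‖ :=
    fun y => calc
      _ ≤ ∑ i, |p i (y i) - q i (y i)| := Finset.abs_prod_sub_prod_le _
          (fun i _ => (abs_apply_apply_le_norm p i (y i)).trans hp)
          (fun i _ => (abs_apply_apply_le_norm q i (y i)).trans hq)
      _ ≤ ∑ _i : ι, ‖p - q‖ := Finset.sum_le_sum fun i _ => abs_apply_apply_le_norm (p - q) i (y i)
      _ = Fintype.card ι * ‖p - q‖ := by simp
  calc |U u p - U u q| = |∑ y, u y * (∏ i, p i (y i) - ∏ i, q i (y i))| := by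
        simp only [U, mul_sub, Finset.sum_sub_distrib]
    _ ≤ ∑ y, |u y| * (Fintype.card ι * ‖p - q‖) := (Finset.abs_sum_le_sum_abs _ _).trans <|
        Finset.sum_le_sum fun y _ => by rw [abs_mul]; gcongr; exact hprod y
    _ = (∑ y, |u y|) * Fintype.card ι * ‖p - q‖ := by rw [mul_assoc, Finset.sum_mul]

/-- `v ↦ U(vᵢ, p₋ᵢ)` (see `partialU_apply`), packaged as a continuous linear functional so that it
commutes with integrals. -/
def partialU (u : (ι → A) → ℝ) (p : ι → A → ℝ) (i : ι) : (ι → A → ℝ) →L[ℝ] ℝ :=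
  ∑ y : ι → A, (u y * ∏ j ∈ Finset.univ.erase i, p j (y j)) •
    (ContinuousLinearMap.proj (y i)).comp
      (ContinuousLinearMap.proj (R := ℝ) (φ := fun _ : ι => A → ℝ) i)

theorem partialU_apply (u : (ι → A) → ℝ) (p : ι → A → ℝ) (i : ι) (v : ι → A → ℝ) :
    partialU u p i v = U u (update p i (v i)) := by
  simp only [partialU, U, sum_apply, smul_apply,
    ContinuousLinearMap.comp_apply, ContinuousLinearMap.proj_apply, smul_eq_mul]
  refine Finset.sum_congr rfl fun y _ => ?_
  have hothers : ∏ j ∈ Finset.univ.erase i, update p i (v i) j (y j) =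
      ∏ j ∈ Finset.univ.erase i, p j (y j) :=
    Finset.prod_congr rfl fun j hj => by rw [update_of_ne (Finset.ne_of_mem_erase hj)]
  rw [← Finset.mul_prod_erase _ _ (Finset.mem_univ i), update_self, hothers]
  ring

theorem abs_partialU_sub_le (u : (ι → A) → ℝ) {p q v : ι → A → ℝ} (hp : ‖p‖ ≤ 1) (hq : ‖q‖ ≤ 1)
    (hv : ‖v‖ ≤ 1) (i : ι) :
    |partialU u p i v - partialU u q i v| ≤ (∑ y, |u y|) * Fintype.card ι * ‖p - q‖ := by
  have hvi : ‖v i‖ ≤ 1 := (norm_le_pi_norm v i).trans hv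
  have hupd : ∀ {r : ι → A → ℝ}, ‖r‖ ≤ 1 → ‖update r i (v i)‖ ≤ 1 := fun {r} hr =>
    (pi_norm_le_iff_of_nonneg zero_le_one).2 fun j => by
      rcases eq_or_ne j i with rfl | h
      · rwa [update_self]
      · rw [update_of_ne h]; exact (norm_le_pi_norm r j).trans hr
  rw [partialU_apply, partialU_apply]
  refine (abs_U_sub_le u (hupd hp) (hupd hq)).trans ?_
  gcongr
  refine (pi_norm_le_iff_of_nonneg (norm_nonneg _)).2 fun j => ?_
  rcases eq_or_ne j i with rfl | h
  · simp
  · simpa [update_of_ne h] using norm_le_pi_norm (p - q) j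

/-- Telescoping along hybrid profiles that switch the players from `p` to `q` one at a time. -/
theorem exists_U_sub_eq_sum_partialU (u : (ι → A) → ℝ) (p q : ι → A → ℝ) :
    ∃ Z : ι → ι → A → ℝ, (∀ i j, Z i j = p j ∨ Z i j = q j) ∧
      U u q - U u p = ∑ i, partialU u (Z i) i (q - p) := by
  suffices ∀ S : Finset ι, ∃ Z : ι → ι → A → ℝ, (∀ i j, Z i j = p j ∨ Z i j = q j) ∧
      U u (S.piecewise q p) - U u p = ∑ i ∈ S, partialU u (Z i) i (q - p) by
    simpa using this Finset.univ
  intro S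
  induction S using Finset.induction_on with
  | empty => exact ⟨fun _ => p, fun _ _ => Or.inl rfl, by simp⟩
  | insert a S ha ih =>
    obtain ⟨Z, hZ, hsum⟩ := ih
    refine ⟨update Z a (S.piecewise q p), fun i j => ?_, ?_⟩
    · rcases eq_or_ne i a with rfl | h
      · rw [update_self]
        by_cases hj : j ∈ S
        · exact Or.inr (Finset.piecewise_eq_of_mem _ _ _ hj)
        · exact Or.inl (Finset.piecewise_eq_of_notMem _ _ _ hj)
      · rw [update_of_ne h]; exact hZ i j
    · have hpa : p a = S.piecewise q p a := (Finset.piecewise_eq_of_notMem _ _ _ ha).symm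
      rw [Finset.sum_insert ha, update_self, Finset.sum_congr rfl fun i hi => by
        rw [update_of_ne (ne_of_mem_of_not_mem hi ha)], ← hsum, map_sub, partialU_apply,
        partialU_apply, hpa, update_eq_self, Finset.piecewise_insert]
      ring

theorem partialU_sub_self (u : (ι → A) → ℝ) (p b : ι → A → ℝ) (i : ι) :
    partialU u p i (b - p) = U u (update p i (b i)) - U u p := by
  rw [map_sub, partialU_apply, partialU_apply, update_eq_self]

def unilateralGain (u : (ι → A) → ℝ) (p b : ι → A → ℝ) : ℝ :=
  ∑ i, (U u (update p i (b i)) - U u p)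

variable {Y : ι → Finset A} {u : (ι → A) → ℝ}

theorem U_update_le_of_mem_BR {p b : ι → A → ℝ} (hb : b ∈ BR Y u 0 p) {i : ι} {q : A → ℝ}
    (hq : q ∈ simplex (Y i)) : U u (update p i q) ≤ U u (update p i (b i)) := by
  simpa using (hb i).2 q hq

theorem unilateralGain_nonneg {p b : ι → A → ℝ} (hp : p ∈ Delta Y) (hb : b ∈ BR Y u 0 p) :
    0 ≤ unilateralGain u p b :=
  Finset.sum_nonneg fun i _ => sub_nonneg.2 (by simpa using U_update_le_of_mem_BR hb (hp i))

theorem U_update_sub_le_unilateralGain {p b : ι → A → ℝ} (hp : p ∈ Delta Y)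
    (hb : b ∈ BR Y u 0 p) {i : ι} {q : A → ℝ} (hq : q ∈ simplex (Y i)) :
    U u (update p i q) - U u p ≤ unilateralGain u p b :=
  (sub_le_sub_right (U_update_le_of_mem_BR hb hq) _).trans <| Finset.single_le_sum
    (fun j _ => sub_nonneg.2 (by simpa using U_update_le_of_mem_BR hb (hp j))) (Finset.mem_univ i)

theorem norm_le_one_of_mem_Fcent {p v : ι → A → ℝ} (hp : p ∈ Delta Y) (hv : v ∈ Fcent Y u p) :
    ‖v‖ ≤ 1 := by
  obtain ⟨b, hb, rfl⟩ := hv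
  exact norm_sub_le_one_of_mem_Delta (fun i => (hb i).1) hp

variable {x : ℝ → ι → A → ℝ}

theorem IsSolution.lipschitzOnWith_one (hx : IsSolution Y (Fcent Y u) x) :
    LipschitzOnWith 1 x (Ici 0) :=
  hx.lipschitzOnWith fun _ hp _ hv => by simpa using norm_le_one_of_mem_Fcent hp hv

theorem IsSolution.norm_sub_le (hx : IsSolution Y (Fcent Y u) x) {s t : ℝ} (hs : 0 ≤ s)
    (hst : s ≤ t) : ‖x t - x s‖ ≤ t - s := by
  simpa [dist_eq_norm, Real.dist_eq, abs_of_nonneg (sub_nonneg.2 hst)] using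
    hx.lipschitzOnWith_one.dist_le_mul t (hs.trans hst) s hs

theorem unilateralGain_sub_le_sum_partialU (u : (ι → A) → ℝ) {p b : ι → A → ℝ}
    {Z : ι → ι → A → ℝ} {h : ℝ} (hp : ‖p‖ ≤ 1) (hbp : ‖b - p‖ ≤ 1) (hZ : ∀ i, ‖Z i‖ ≤ 1)
    (hpZ : ∀ i, ‖p - Z i‖ ≤ h) :
    unilateralGain u p b - (∑ y, |u y|) * Fintype.card ι ^ 2 * h ≤
      ∑ i, partialU u (Z i) i (b - p) := by
  have hterm : ∀ i, partialU u p i (b - p) - (∑ y, |u y|) * Fintype.card ι * h ≤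
      partialU u (Z i) i (b - p) := fun i => by
    have hdiff := (abs_partialU_sub_le u hp (hZ i) hbp i).trans
      (mul_le_mul_of_nonneg_left (hpZ i) (by positivity))
    linarith [(abs_le.1 hdiff).2]
  calc unilateralGain u p b - (∑ y, |u y|) * Fintype.card ι ^ 2 * h
      = ∑ i, (partialU u p i (b - p) - (∑ y, |u y|) * Fintype.card ι * h) := by
        simp only [unilateralGain, partialU_sub_self, Finset.sum_sub_distrib, Finset.sum_const,
          Finset.card_univ, nsmul_eq_mul]
        ring
    _ ≤ ∑ i, partialU u (Z i) i (b - p) := Finset.sum_le_sum fun i _ => hterm i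

/-- By telescoping, `U (x t) - U (x s) = ∫ Λ (ẋ r) dr` for a linear `Λ` that is within `O(t - s)` of
`∑ i, partialU u (x r) i`, and the latter maps `ẋ r = b - x r` to the unilateral gain at `x r`. -/
theorem IsSolution.mul_sub_sub_sq_le_U_sub (hx : IsSolution Y (Fcent Y u) x) {s t c : ℝ}
    (hs : 0 ≤ s) (hst : s ≤ t)
    (hc : ∀ r ∈ Ioc s t, ∀ b ∈ BR Y u 0 (x r), c ≤ unilateralGain u (x r) b) :
    c * (t - s) - (∑ y, |u y|) * Fintype.card ι ^ 2 * (t - s) ^ 2 ≤ U u (x t) - U u (x s) := by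
  obtain ⟨g, hgF, hrepr⟩ := hx.exists_integral_repr
  obtain ⟨hgi, hxst⟩ := hrepr hs hst
  have hx1 : ∀ r, 0 ≤ r → ‖x r‖ ≤ 1 := fun r hr => norm_le_one_of_mem_Delta (hx.1 r hr)
  obtain ⟨Z, hZ, htel⟩ := exists_U_sub_eq_sum_partialU u (x s) (x t)
  have hZ1 : ∀ i, ‖Z i‖ ≤ 1 := fun i => by
    simpa using (norm_sub_le_max_of_forall_eq_or_eq (hZ i) 0).trans
      (max_le (by simpa using hx1 s hs) (by simpa using hx1 t (hs.trans hst)))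
  have hZx : ∀ r ∈ Ioc s t, ∀ i, ‖x r - Z i‖ ≤ t - s := fun r hr i => by
    rw [norm_sub_rev]
    refine (norm_sub_le_max_of_forall_eq_or_eq (hZ i) (x r)).trans (max_le ?_ ?_)
    · rw [norm_sub_rev]; linarith [hx.norm_sub_le hs hr.1.le, hr.2]
    · linarith [hx.norm_sub_le (hs.trans hr.1.le) hr.2, hr.1]
  set Λ := ∑ i, partialU u (Z i) i
  have hΛ : U u (x t) - U u (x s) = ∫ r in Ioc s t, Λ (g r) := by
    rw [htel, ← sum_apply, hxst, ContinuousLinearMap.integral_comp_comm _ hgi]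
  have hpoint : ∀ᵐ r ∂volume.restrict (Ioc s t),
      c - (∑ y, |u y|) * Fintype.card ι ^ 2 * (t - s) ≤ Λ (g r) := by
    filter_upwards [ae_restrict_of_ae_restrict_of_subset (fun r hr => hs.trans hr.1.le) hgF,
      ae_restrict_mem measurableSet_Ioc] with r ⟨b, hb, hgb⟩ hr
    have hr0 : 0 ≤ r := hs.trans hr.1.le
    have hbr : ‖b - x r‖ ≤ 1 := norm_le_one_of_mem_Fcent (hx.1 r hr0) ⟨b, hb, rfl⟩
    rw [← hgb, sum_apply]
    linarith [hc r hr b hb, unilateralGain_sub_le_sum_partialU u (hx1 r hr0) hbr hZ1 (hZx r hr)]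
  calc c * (t - s) - (∑ y, |u y|) * Fintype.card ι ^ 2 * (t - s) ^ 2
      = ∫ _ in Ioc s t, (c - (∑ y, |u y|) * Fintype.card ι ^ 2 * (t - s)) := by
        rw [setIntegral_const, Real.volume_real_Ioc_of_le hst, smul_eq_mul]; ring
    _ ≤ ∫ r in Ioc s t, Λ (g r) :=
        integral_mono_ae (integrableOn_const measure_Ioc_lt_top.ne) (Λ.integrable_comp hgi) hpoint
    _ = U u (x t) - U u (x s) := hΛ.symm

theorem IsSolution.monotoneOn_U (hx : IsSolution Y (Fcent Y u) x) :
    MonotoneOn (fun t => U u (x t)) (Ici 0) :=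
  monotoneOn_of_sub_sq_le ordConnected_Ici ((∑ y, |u y|) * Fintype.card ι ^ 2)
    fun s hs t _ hst => by
      have := hx.mul_sub_sub_sq_le_U_sub hs hst (c := 0) fun r hr _ hb =>
        unilateralGain_nonneg (hx.1 r (le_trans hs hr.1.le)) hb
      linarith

theorem IsSolution.U_le_of_mem_omegaLimitSet (hx : IsSolution Y (Fcent Y u) x)
    {p : ι → A → ℝ} (hp : p ∈ omegaLimitSet x) {t : ℝ} (ht : 0 ≤ t) : U u (x t) ≤ U u p :=
  omegaLimitSet_subset_of_isClosed (isClosed_le continuous_const (continuous_U u))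
    ((eventually_ge_atTop t).mono fun _ hr => hx.monotoneOn_U ht (ht.trans hr) hr) hp

/-- Near a point where player `i` gains by deviating to `q`, the solution gains utility at a
definite rate, so `U ∘ x` would exceed its limit `U p`. -/
theorem IsSolution.U_update_le_of_mem_omegaLimitSet (hx : IsSolution Y (Fcent Y u) x)
    {p : ι → A → ℝ} (hp : p ∈ omegaLimitSet x) {i : ι} {q : A → ℝ} (hq : q ∈ simplex (Y i)) :
    U u (update p i q) ≤ U u p := by
  by_contra! hlt
  set δ := (U u (update p i q) - U u p) / 2 with hδ
  have hδ0 : 0 < δ := by linarith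
  have hcont : Continuous fun z => U u (update z i q) - U u z :=
    ((continuous_U u).comp (continuous_id.update i continuous_const)).sub (continuous_U u)
  have hgain : ∀ᶠ z in 𝓝 p, δ < U u (update z i q) - U u z :=
    (hcont.tendsto p).eventually (lt_mem_nhds (by linarith))
  obtain ⟨ρ, hρ, hball⟩ := Metric.eventually_nhds_iff.1 hgain
  set C := (∑ y, |u y|) * Fintype.card ι ^ 2
  have hC : 0 ≤ C := by positivity
  set τ := min (ρ / 2) (δ / (2 * (C + 1)))
  have hτ : 0 < τ := lt_min (by positivity) (by positivity)
  have hCτ : C * τ ≤ δ / 2 := calc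
    C * τ ≤ (C + 1) * (δ / (2 * (C + 1))) := by gcongr; linarith; exact min_le_right _ _
    _ = δ / 2 := by field_simp
  obtain ⟨tk, htk, hxtk⟩ := hp
  obtain ⟨k, hk0, hkp, hkU⟩ := ((htk.eventually (eventually_ge_atTop 0)).and
    ((Metric.tendsto_nhds.1 hxtk (ρ / 2) (by positivity)).and
      (((continuous_U u).tendsto p).comp hxtk |>.eventually
        (lt_mem_nhds (sub_lt_self (U u p) (by positivity : 0 < δ * τ / 2)))))).exists
  have hrate := hx.mul_sub_sub_sq_le_U_sub hk0 (le_add_of_nonneg_right hτ.le) (c := δ)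
    fun r hr b hb => by
      have hr0 : 0 ≤ r := hk0.trans hr.1.le
      have hstep : dist (x r) (x (tk k)) ≤ τ := by
        rw [dist_eq_norm]; linarith [hx.norm_sub_le hk0 hr.1.le, hr.2]
      have hnear : dist (x r) p < ρ := calc
        dist (x r) p ≤ dist (x r) (x (tk k)) + dist (x (tk k)) p := dist_triangle _ _ _
        _ < τ + ρ / 2 := add_lt_add_of_le_of_lt hstep hkp
        _ ≤ ρ := by linarith [min_le_left (ρ / 2) (δ / (2 * (C + 1)))]
      exact (hball hnear).le.trans (U_update_sub_le_unilateralGain (hx.1 r hr0) hb hq)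
  have hbound := hx.U_le_of_mem_omegaLimitSet ⟨tk, htk, hxtk⟩
    (hk0.trans (le_add_of_nonneg_right hτ.le))
  simp only [Function.comp] at hkU
  linarith [mul_le_mul_of_nonneg_right hCτ hτ.le]

end

end

variable {ι A κ : Type*} [Fintype ι] [DecidableEq ι] [Fintype A] [DecidableEq κ]

variable [Nonempty ι]

theorem omegaLimit_of_centroid_solution_general
    (Y : ι → Finset A) (u : (ι → A) → ℝ)
    (cls : ι → κ)
    (x : ℝ → ι → A → ℝ) (hx : IsSolution Y (Fcent Y u) x)
    (hcc : ∀ t : ℝ, 0 ≤ t → classConst cls (x t)) :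
    IsConnected (omegaLimitSet x) ∧ omegaLimitSet x ⊆ SNE Y u cls ∧
      ∀ p ∈ omegaLimitSet x, ∀ p' ∈ omegaLimitSet x, U u p = U u p' := by
  have hU : ∀ p ∈ omegaLimitSet x, ∀ p' ∈ omegaLimitSet x, U u p ≤ U u p' :=
    fun p hp p' hp' => omegaLimitSet_subset_of_isClosed
      (isClosed_le (continuous_U u) continuous_const)
      ((eventually_ge_atTop 0).mono fun _ ht => hx.U_le_of_mem_omegaLimitSet hp' ht) hp
  refine ⟨isConnected_omegaLimitSet (isCompact_Delta Y) hx.1 hx.lipschitzOnWith_one.continuousOn,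
    fun p hp => ⟨⟨?_, fun i q hq => hx.U_update_le_of_mem_omegaLimitSet hp hq⟩, ?_⟩,
    fun p hp p' hp' => (hU p hp p' hp').antisymm (hU p' hp' p hp)⟩
  · exact omegaLimitSet_subset_of_isClosed (isClosed_Delta Y)
      ((eventually_ge_atTop 0).mono hx.1) hp
  · exact omegaLimitSet_subset_of_isClosed (isClosed_setOf_classConst cls)
      ((eventually_ge_atTop 0).mono hcc) hp

/-- **Proposition 1(i).** The ω-limit set of every (class-constant-valued) solution of the
centroid CT-ECFP inclusion `ẏ ∈ BR(y) − y` is a connected subset of SNE along which `U`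
is constant. -/
theorem omegaLimit_of_centroid_solution
    (Y : ι → Finset A) (hY : ∀ i, (Y i).Nonempty) (u : (ι → A) → ℝ)
    (cls : ι → κ) (hpi : PermInvariant Y u cls)
    (x : ℝ → ι → A → ℝ) (hx : IsSolution Y (Fcent Y u) x)
    (hcc : ∀ t : ℝ, 0 ≤ t → classConst cls (x t)) :
    IsConnected (omegaLimitSet x) ∧ omegaLimitSet x ⊆ SNE Y u cls ∧
      ∀ p ∈ omegaLimitSet x, ∀ p' ∈ omegaLimitSet x, U u p = U u p' :=
  omegaLimit_of_centroid_solution_general Y u cls x hx hcc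

end ECFP
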